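/- Fix a real number q > 1. For all integers n ≥ 1, α, and x ≥ 0, the recursion vol_{n,α}(x) = Σ_{y=0}^{x} q^{α·n·y} + Σ_{β=1}^{n−1} binom(n,β)_q · q^{α(n−β)} · q^{α·n·(x−1)} · Σ_{y=0}^{x−1} q^{−α·n·y} · vol_{n−β, α+β}(y) holds (the sums over β and over 0 ≤ y ≤ x−1 being empty when n = 1 or x = 0, respectively). -/
import Mathlib


open Finset

noncomputable section

/-- `μ_m := ∏_{i=1}^{m} (1 − q⁻¹)/(1 − q^{-i})`. -/
def mu (q : ℝ) (m : ℕ) : ℝ :=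
  ∏ i ∈ Finset.range m, (1 - q⁻¹) / (1 - q ^ (-((i : ℤ) + 1)))

/-- For a weakly increasing tuple `λ`, the product `∏_j μ_{n_j}` over the lengths
`(n_1, …, n_s)` of the maximal constant segments of `λ` (equivalently, over the
cardinalities of the fibers of `λ`). -/
def typeProd (q : ℝ) {n : ℕ} (l : Fin n → ℤ) : ℝ :=
  ∏ v ∈ Finset.image l Finset.univ, mu q ((Finset.univ.filter fun i => l i = v).card)

/-- The weight `w_n(λ) := ((∏_j μ_{n_j})/μ_n) · ∏_{i<j} q^{λ_j − λ_i}`. -/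
def weight (q : ℝ) {n : ℕ} (l : Fin n → ℤ) : ℝ :=
  (typeProd q l / mu q n) *
    ∏ p ∈ Finset.univ.filter (fun p : Fin n × Fin n => p.1 < p.2), q ^ (l p.2 - l p.1)

open scoped Classical in
/-- The weakly increasing integer tuples `0 ≤ λ_1 ≤ ⋯ ≤ λ_n ≤ x`. -/
def tuples (n x : ℕ) : Finset (Fin n → ℤ) :=
  (Fintype.piFinset fun _ : Fin n => Finset.Icc (0 : ℤ) (x : ℤ)).filter Monotone

/-- `vol_{n,α}(x) := Σ_{0 ≤ λ_1 ≤ ⋯ ≤ λ_n ≤ x} q^{α(λ_1+⋯+λ_n)} · w_n(λ)`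
(for `n = 0` this is `1` by convention, the sum being over the single empty tuple). -/
def vol (q : ℝ) (n : ℕ) (α : ℤ) (x : ℕ) : ℝ :=
  ∑ l ∈ tuples n x, q ^ (α * ∑ i, l i) * weight q l

/-- The Gaussian binomial coefficient `∏_{i=1}^{β} (q^{n−β+i} − 1)/(q^{i} − 1)`. -/
def gaussBinom (q : ℝ) (n β : ℕ) : ℝ :=
  ∏ i ∈ Finset.range β, (q ^ (n - β + i + 1) - 1) / (q ^ (i + 1) - 1)

/-- Evaluation of a finitely supported family of coefficients `c : ℕ × ℕ → ℝ` as the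
`q`-quasi-polynomial `x ↦ Σ_{(a,b)} c(a,b) · q^{a·x} · x^{b}`. -/
def qQuasiEval (q : ℝ) (c : (ℕ × ℕ) →₀ ℝ) (x : ℕ) : ℝ :=
  c.sum fun p r => r * q ^ (p.1 * x) * (x : ℝ) ^ p.2

end

section helpers
variable {q : ℝ}

lemma prod_zpow_sum (hq : q ≠ 0) {ι : Type*} (s : Finset ι) (f : ι → ℤ) :
    ∏ i ∈ s, q ^ f i = q ^ (∑ i ∈ s, f i) := by
  induction s using Finset.cons_induction with
  | empty => simp
  | cons a s ha ih => rw [Finset.prod_cons, Finset.sum_cons, ih, zpow_add₀ hq]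

lemma one_sub_neg_zpow_pos (hq : 1 < q) (i : ℕ) : 0 < 1 - q ^ (-((i:ℤ)+1)) := by
  have : q ^ (-((i:ℤ)+1)) < 1 := zpow_lt_one_of_neg₀ hq (by omega)
  linarith

lemma mu_pos (hq : 1 < q) (m : ℕ) : 0 < mu q m := by
  refine Finset.prod_pos fun i _ => div_pos ?_ (one_sub_neg_zpow_pos hq i)
  have : q⁻¹ < 1 := inv_lt_one_of_one_lt₀ hq
  linarith

lemma mu_ne_zero (hq : 1 < q) (m : ℕ) : mu q m ≠ 0 := (mu_pos hq m).ne'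

lemma one_sub_hfac (hq : 1 < q) (k : ℕ) :
    (1 - q ^ (-((k:ℤ)+1))) = (q ^ (k+1) - 1) / q ^ (k+1) := by
  have hne : q ≠ 0 := by linarith
  rw [eq_div_iff (pow_ne_zero _ hne), sub_mul, one_mul]
  congr 1
  rw [← zpow_natCast q (k+1), ← zpow_add₀ hne]
  push_cast
  rw [show -((k:ℤ)+1) + ((k:ℤ)+1) = 0 by ring, zpow_zero]

lemma gaussBinom_eq (hq : 1 < q) {n β : ℕ} (hβ : β ≤ n) :
    gaussBinom q n β = mu q β * mu q (n - β) / mu q n * q ^ (β * (n - β)) := by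
  have h0 : (0:ℝ) < q := by linarith
  have hne : q ≠ 0 := h0.ne'
  set m := n - β with hm
  have hnm : n = m + β := by omega
  set f : ℕ → ℝ := fun i => (1 - q ^ (-((i:ℤ)+1))) with hf
  have hmu : ∀ k : ℕ, mu q k = (1 - q⁻¹) ^ k / ∏ i ∈ Finset.range k, f i := by
    intro k
    rw [mu, Finset.prod_div_distrib, Finset.prod_const, Finset.card_range]
  have hfne : ∀ i : ℕ, f i ≠ 0 := fun i => (one_sub_neg_zpow_pos hq i).ne'
  have hDne : ∀ k : ℕ, (∏ i ∈ Finset.range k, f i) ≠ 0 :=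
    fun k => Finset.prod_ne_zero_iff.2 fun i _ => hfne i
  have hSne : (∏ i ∈ Finset.range β, f (m + i)) ≠ 0 :=
    Finset.prod_ne_zero_iff.2 fun i _ => hfne (m+i)
  have hq1 : (1 - q⁻¹) ≠ 0 := by
    have : q⁻¹ < 1 := inv_lt_one_of_one_lt₀ hq
    linarith
  have hratio : mu q β * mu q m / mu q n
      = (∏ i ∈ Finset.range β, f (m + i)) / ∏ i ∈ Finset.range β, f i := by
    rw [hmu, hmu, hmu, hnm, Finset.prod_range_add, pow_add]
    have d1 := hDne β
    have d2 := hDne m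
    have hq1' : q - 1 ≠ 0 := by linarith
    field_simp
  rw [hratio]
  have hconst : (q : ℝ) ^ (β * m) = ∏ _i ∈ Finset.range β, q ^ m := by
    rw [Finset.prod_const, Finset.card_range, ← pow_mul, Nat.mul_comm]
  rw [hconst, ← Finset.prod_div_distrib, ← Finset.prod_mul_distrib, gaussBinom]
  have hmm : n - β = m := hm.symm
  refine Finset.prod_congr rfl fun i hi => ?_
  rw [hmm, hf]
  simp only []
  rw [one_sub_hfac hq (m+i), one_sub_hfac hq i]
  have hpow1 : (q:ℝ) ^ (i+1) ≠ 0 := pow_ne_zero _ hne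
  have hpowm : (q:ℝ) ^ (m+i+1) ≠ 0 := pow_ne_zero _ hne
  have hb : (q:ℝ) ^ (i+1) - 1 ≠ 0 := by
    have : (1:ℝ) < q ^ (i+1) := one_lt_pow₀ hq (by omega)
    linarith
  rw [show m + i + 1 = m + (i + 1) by ring, pow_add]
  field_simp


section h2

lemma mem_tuples {n x : ℕ} {l : Fin n → ℤ} :
    l ∈ tuples n x ↔ (∀ i, 0 ≤ l i ∧ l i ≤ (x:ℤ)) ∧ Monotone l := by
  classical
  simp [tuples, Fintype.mem_piFinset, Finset.mem_Icc, forall_and]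

lemma card_filter_val_lt {n β : ℕ} (hβ : β ≤ n) :
    ((univ : Finset (Fin n)).filter fun i : Fin n => (i:ℕ) < β).card = β := by
  have h : ((univ : Finset (Fin n)).filter fun i : Fin n => (i:ℕ) < β).card
      = (Finset.range β).card := by
    apply Finset.card_bij' (i := fun (i : Fin n) _ => (i:ℕ))
      (j := fun k hk => (⟨k, by simp only [Finset.mem_range] at hk; omega⟩ : Fin n))
    case hi =>
      intro a ha
      simp only [Finset.mem_filter, Finset.mem_univ, true_and] at ha
      simpa using ha
    case hj =>
      intro k hk
      simp only [Finset.mem_filter, Finset.mem_univ, true_and]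
      simpa using hk
    case left_inv => intro a ha; rfl
    case right_inv => intro k hk; rfl
  rw [h, Finset.card_range]

lemma lower_mem_iff {n : ℕ} {s : Finset (Fin n)}
    (h : ∀ j ∈ s, ∀ i : Fin n, i ≤ j → i ∈ s) (i : Fin n) :
    i ∈ s ↔ (i:ℕ) < s.card := by
  constructor
  · intro hi
    have hsub : Finset.Iic i ⊆ s := fun j hj => h i hi j (Finset.mem_Iic.1 hj)
    have hc := Finset.card_le_card hsub
    rw [Fin.card_Iic] at hc
    omega
  · intro hlt
    by_contra hni
    have hsub : s ⊆ Finset.Iio i := by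
      intro j hj
      rw [Finset.mem_Iio]
      by_contra hij
      exact hni (h j hj i (le_of_not_gt hij))
    have := Finset.card_le_card hsub
    rw [Fin.card_Iio] at this
    omega

lemma pairSum_eq {n : ℕ} (l : Fin n → ℤ) :
    ∑ p ∈ Finset.univ.filter (fun p : Fin n × Fin n => p.1 < p.2), (l p.2 - l p.1)
      = ∑ j : Fin n, (2 * (j:ℤ) - (n:ℤ) + 1) * l j := by
  rw [Finset.sum_sub_distrib]
  have hA : ∑ p ∈ Finset.univ.filter (fun p : Fin n × Fin n => p.1 < p.2), l p.2
      = ∑ j : Fin n, (j:ℤ) * l j := by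
    rw [Finset.sum_filter, Fintype.sum_prod_type, Finset.sum_comm]
    refine Finset.sum_congr rfl fun j _ => ?_
    rw [Finset.sum_ite, Finset.sum_const_zero, add_zero]
    have h1 : (Finset.univ.filter fun x : Fin n => ((x, j) : Fin n × Fin n).1 < (x, j).2)
        = Finset.Iio j := by
      ext k; simp
    rw [h1]
    have h2 : ∑ x ∈ Finset.Iio j, l (((x, j) : Fin n × Fin n)).2 = ∑ _x ∈ Finset.Iio j, l j :=
      Finset.sum_congr rfl fun x _ => rfl
    rw [h2, Finset.sum_const, Fin.card_Iio, nsmul_eq_mul]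
  have hB : ∑ p ∈ Finset.univ.filter (fun p : Fin n × Fin n => p.1 < p.2), l p.1
      = ∑ i : Fin n, ((n:ℤ) - 1 - (i:ℤ)) * l i := by
    rw [Finset.sum_filter, Fintype.sum_prod_type]
    refine Finset.sum_congr rfl fun i _ => ?_
    rw [Finset.sum_ite, Finset.sum_const_zero, add_zero]
    have h1 : (Finset.univ.filter fun x : Fin n => ((i, x) : Fin n × Fin n).1 < (i, x).2)
        = Finset.Ioi i := by
      ext k; simp
    rw [h1]
    have h2 : ∑ x ∈ Finset.Ioi i, l (((i, x) : Fin n × Fin n)).1 = ∑ _x ∈ Finset.Ioi i, l i :=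
      Finset.sum_congr rfl fun x _ => rfl
    rw [h2, Finset.sum_const, Fin.card_Ioi, nsmul_eq_mul]
    have h2 : ((n - 1 - (i:ℕ) : ℕ) : ℤ) = (n:ℤ) - 1 - (i:ℤ) := by
      have := i.isLt; omega
    rw [h2]
  rw [hA, hB, ← Finset.sum_sub_distrib]
  exact Finset.sum_congr rfl fun j _ => by ring

lemma sum_coeff_zero (n : ℕ) : ∑ j : Fin n, (2 * (j:ℤ) - (n:ℤ) + 1) = 0 := by
  have claim : ∀ k : ℕ, ∑ i ∈ Finset.range k, (2 * (i:ℤ)) = (k:ℤ) * ((k:ℤ) - 1) := by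
    intro k
    induction k with
    | zero => simp
    | succ k ih => rw [Finset.sum_range_succ, ih]; push_cast; ring
  rw [Fin.sum_univ_eq_sum_range (fun j => 2 * (j:ℤ) - (n:ℤ) + 1) n]
  have h1 : ∀ i : ℕ, 2 * (i:ℤ) - (n:ℤ) + 1 = 2 * (i:ℤ) + (1 - (n:ℤ)) := fun i => by ring
  simp_rw [h1]
  rw [Finset.sum_add_distrib, Finset.sum_const, Finset.card_range, claim, nsmul_eq_mul]
  ring

lemma sum_tail {M : Type*} [AddCommMonoid M] {n β : ℕ} (hβ : β < n) (g : Fin n → M) :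
    ∑ i ∈ (univ : Finset (Fin n)).filter (fun i : Fin n => ¬ (i:ℕ) < β), g i
      = ∑ w : Fin (n - β), g ⟨β + (w:ℕ), by have := w.isLt; omega⟩ := by
  refine Finset.sum_nbij' (i := fun i => (⟨(i:ℕ) - β, by have := i.isLt; omega⟩ : Fin (n - β)))
    (j := fun w => (⟨β + (w:ℕ), by have := w.isLt; omega⟩ : Fin n)) ?_ ?_ ?_ ?_ ?_
  · intro a _; exact Finset.mem_univ _
  · intro w _
    simp only [Finset.mem_filter, Finset.mem_univ, true_and, not_lt]
    omega
  · intro a ha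
    simp only [Finset.mem_filter, Finset.mem_univ, true_and, not_lt] at ha
    apply Fin.ext
    simp only []
    omega
  · intro w _
    apply Fin.ext
    simp only []
    omega
  · intro a ha
    simp only [Finset.mem_filter, Finset.mem_univ, true_and, not_lt] at ha
    congr 1
    apply Fin.ext
    simp only []
    omega



noncomputable section ext
open Finset

/-- The extension of `l'` by a block of `β` copies of `t` below, shifted up by `t+1`. -/
def extt (n β : ℕ) (t : ℤ) (l' : Fin (n - β) → ℤ) : Fin n → ℤ :=
  fun i => if h : (i:ℕ) < β then t
    else l' ⟨(i:ℕ) - β, by have := i.isLt; omega⟩ + (t + 1)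

variable {q : ℝ} {n β : ℕ} {t : ℤ}

lemma extt_lt (l' : Fin (n - β) → ℤ) {i : Fin n} (h : (i:ℕ) < β) :
    extt n β t l' i = t := dif_pos h

lemma extt_ge (l' : Fin (n - β) → ℤ) {i : Fin n} (h : ¬ (i:ℕ) < β) :
    extt n β t l' i = l' ⟨(i:ℕ) - β, by have := i.isLt; omega⟩ + (t + 1) := dif_neg h

lemma extt_apply_add (l' : Fin (n - β) → ℤ) (w : Fin (n - β)) (hw : β + (w:ℕ) < n) :
    extt n β t l' ⟨β + (w:ℕ), hw⟩ = l' w + (t + 1) := by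
  rw [extt_ge l' (by simp only []; omega)]
  congr 1
  congr 1
  apply Fin.ext
  simp only []
  omega

lemma sum_extt (hβn : β < n) (l' : Fin (n - β) → ℤ) :
    ∑ i, extt n β t l' i
      = (β:ℤ) * t + ((∑ w, l' w) + ((n - β : ℕ):ℤ) * (t + 1)) := by
  rw [← Finset.sum_filter_add_sum_filter_not univ (fun i : Fin n => (i:ℕ) < β)]
  congr 1
  · have h1 : ∑ i ∈ (univ : Finset (Fin n)).filter (fun i : Fin n => (i:ℕ) < β),
        extt n β t l' i = ∑ i ∈ (univ : Finset (Fin n)).filter (fun i : Fin n => (i:ℕ) < β), t :=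
      Finset.sum_congr rfl fun i hi => extt_lt l' (by
        simp only [Finset.mem_filter] at hi; exact hi.2)
    rw [h1, Finset.sum_const, card_filter_val_lt hβn.le, nsmul_eq_mul]
  · rw [sum_tail hβn]
    have h2 : ∀ w : Fin (n - β), extt n β t l' ⟨β + (w:ℕ), by have := w.isLt; omega⟩
        = l' w + (t+1) := fun w => extt_apply_add l' w _
    rw [Finset.sum_congr rfl fun w _ => h2 w, Finset.sum_add_distrib, Finset.sum_const,
      Finset.card_univ, Fintype.card_fin, nsmul_eq_mul]

lemma pairSum_extt (hβn : β < n) (l' : Fin (n - β) → ℤ) :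
    ∑ j : Fin n, (2 * (j:ℤ) - (n:ℤ) + 1) * extt n β t l' j
      = (∑ w : Fin (n - β), (2 * (w:ℤ) - ((n - β : ℕ):ℤ) + 1) * l' w)
        + (β:ℤ) * (∑ w, l' w) + (β:ℤ) * ((n - β : ℕ):ℤ) := by
  have hcast : ((n - β : ℕ):ℤ) = (n:ℤ) - (β:ℤ) := by omega
  rw [← Finset.sum_filter_add_sum_filter_not univ (fun i : Fin n => (i:ℕ) < β)]
  have htailc : ∑ i ∈ (univ : Finset (Fin n)).filter (fun i : Fin n => ¬ (i:ℕ) < β),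
      (2 * (i:ℤ) - (n:ℤ) + 1) = (β:ℤ) * ((n - β:ℕ):ℤ) := by
    rw [sum_tail hβn]
    have h1 : ∀ w : Fin (n - β), (2 * (((⟨β + (w:ℕ), by have := w.isLt; omega⟩ : Fin n)):ℤ) - (n:ℤ) + 1)
        = (2 * (w:ℤ) - ((n - β:ℕ):ℤ) + 1) + (β:ℤ) := by
      intro w
      have : ((((⟨β + (w:ℕ), by have := w.isLt; omega⟩ : Fin n)):ℕ):ℤ) = (β:ℤ) + (w:ℤ) := by
        simp only []; push_cast; ring
      rw [this]
      omega
    rw [Finset.sum_congr rfl fun w _ => h1 w, Finset.sum_add_distrib, sum_coeff_zero (n - β),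
      Finset.sum_const, Finset.card_univ, Fintype.card_fin, nsmul_eq_mul, zero_add]
    ring
  have hheadc : ∑ i ∈ (univ : Finset (Fin n)).filter (fun i : Fin n => (i:ℕ) < β),
      (2 * (i:ℤ) - (n:ℤ) + 1) = -((β:ℤ) * ((n - β:ℕ):ℤ)) := by
    have hall := Finset.sum_filter_add_sum_filter_not (univ : Finset (Fin n))
      (fun i : Fin n => (i:ℕ) < β) (fun i : Fin n => 2 * (i:ℤ) - (n:ℤ) + 1)
    rw [sum_coeff_zero n] at hall
    rw [htailc] at hall
    linarith
  have hhead : ∑ i ∈ (univ : Finset (Fin n)).filter (fun i : Fin n => (i:ℕ) < β),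
      (2 * (i:ℤ) - (n:ℤ) + 1) * extt n β t l' i = -((β:ℤ) * ((n - β:ℕ):ℤ)) * t := by
    have h1 : ∀ i ∈ (univ : Finset (Fin n)).filter (fun i : Fin n => (i:ℕ) < β),
        (2 * (i:ℤ) - (n:ℤ) + 1) * extt n β t l' i = (2 * (i:ℤ) - (n:ℤ) + 1) * t := by
      intro i hi
      simp only [Finset.mem_filter] at hi
      rw [extt_lt l' hi.2]
    rw [Finset.sum_congr rfl h1, ← Finset.sum_mul, hheadc]
  have htail : ∑ i ∈ (univ : Finset (Fin n)).filter (fun i : Fin n => ¬ (i:ℕ) < β),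
      (2 * (i:ℤ) - (n:ℤ) + 1) * extt n β t l' i
      = (∑ w : Fin (n - β), (2 * (w:ℤ) - ((n - β:ℕ):ℤ) + 1) * l' w)
        + (β:ℤ) * (∑ w, l' w) + (t + 1) * ((β:ℤ) * ((n - β:ℕ):ℤ)) := by
    rw [sum_tail hβn]
    have h1 : ∀ w : Fin (n - β),
        (2 * (((⟨β + (w:ℕ), by have := w.isLt; omega⟩ : Fin n)):ℤ) - (n:ℤ) + 1)
          * extt n β t l' ⟨β + (w:ℕ), by have := w.isLt; omega⟩
        = ((2 * (w:ℤ) - ((n - β:ℕ):ℤ) + 1) * l' w) + ((β:ℤ) * l' w)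
          + ((t+1) * (2 * (w:ℤ) - ((n - β:ℕ):ℤ) + 1) + (t+1) * (β:ℤ)) := by
      intro w
      rw [extt_apply_add l' w]
      have h2 : ((((⟨β + (w:ℕ), by have := w.isLt; omega⟩ : Fin n)):ℕ):ℤ) = (β:ℤ) + (w:ℤ) := by
        simp only []; push_cast; ring
      rw [h2]
      have h3 : (2 * ((β:ℤ) + (w:ℤ)) - (n:ℤ) + 1) = (2 * (w:ℤ) - ((n - β:ℕ):ℤ) + 1) + (β:ℤ) := by
        omega
      rw [h3]
      ring
    rw [Finset.sum_congr rfl fun w _ => h1 w, Finset.sum_add_distrib, Finset.sum_add_distrib,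
      ← Finset.mul_sum, Finset.sum_add_distrib, ← Finset.mul_sum, sum_coeff_zero (n - β),
      Finset.sum_const, Finset.card_univ, Fintype.card_fin, nsmul_eq_mul]
    push_cast
    ring
  rw [hhead, htail]
  ring

end ext



noncomputable section tp
open Finset
variable {q : ℝ} {n β : ℕ} {t : ℤ}

lemma extt_eq_t_iff (l' : Fin (n - β) → ℤ) (hl' : ∀ w, 0 ≤ l' w) (i : Fin n) :
    extt n β t l' i = t ↔ (i:ℕ) < β := by
  constructor
  · intro h
    by_contra hge
    rw [extt_ge l' hge] at h
    have := hl' ⟨(i:ℕ) - β, by have := i.isLt; omega⟩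
    omega
  · exact extt_lt l'

lemma extt_fiber_t (hβn : β ≤ n) (l' : Fin (n - β) → ℤ) (hl' : ∀ w, 0 ≤ l' w) :
    ((univ : Finset (Fin n)).filter fun i => extt n β t l' i = t).card = β := by
  have h : ((univ : Finset (Fin n)).filter fun i => extt n β t l' i = t)
      = (univ : Finset (Fin n)).filter fun i : Fin n => (i:ℕ) < β :=
    Finset.filter_congr fun i _ => by
      constructor
      · exact fun h => (extt_eq_t_iff l' hl' i).1 h
      · exact fun h => (extt_eq_t_iff l' hl' i).2 h
  rw [h, card_filter_val_lt hβn]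

lemma extt_fiber_shift (hβn : β < n) (l' : Fin (n - β) → ℤ) (hl' : ∀ w, 0 ≤ l' w)
    (v : ℤ) (hv : 0 ≤ v) :
    ((univ : Finset (Fin n)).filter fun i => extt n β t l' i = v + (t + 1)).card
      = ((univ : Finset (Fin (n - β))).filter fun w => l' w = v).card := by
  apply Finset.card_bij' (i := fun (a : Fin n) ha =>
      (⟨(a:ℕ) - β, by have := a.isLt; omega⟩ : Fin (n - β)))
    (j := fun (w : Fin (n - β)) hw => (⟨β + (w:ℕ), by have := w.isLt; omega⟩ : Fin n))
  case hi =>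
    intro a ha
    simp only [Finset.mem_filter, Finset.mem_univ, true_and] at ha ⊢
    have hge : ¬ (a:ℕ) < β := by
      intro hlt
      rw [extt_lt l' hlt] at ha
      omega
    rw [extt_ge l' hge] at ha
    exact add_right_cancel ha
  case hj =>
    intro w hw
    simp only [Finset.mem_filter, Finset.mem_univ, true_and] at hw ⊢
    rw [extt_apply_add l' w (by have := w.isLt; omega), hw]
  case left_inv =>
    intro a ha
    simp only [Finset.mem_filter, Finset.mem_univ, true_and] at ha
    have hge : ¬ (a:ℕ) < β := by
      intro hlt; rw [extt_lt l' hlt] at ha; omega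
    apply Fin.ext
    simp only []
    omega
  case right_inv =>
    intro w hw
    apply Fin.ext
    simp only []
    omega

lemma typeProd_extt (hq : 1 < q) (hβ1 : 1 ≤ β) (hβn : β < n)
    (l' : Fin (n - β) → ℤ) (hl' : ∀ w, 0 ≤ l' w) :
    typeProd q (extt n β t l') = mu q β * typeProd q l' := by
  classical
  have himg : Finset.image (extt n β t l') univ
      = insert t ((Finset.image l' univ).image (fun v => v + (t + 1))) := by
    ext v
    simp only [Finset.mem_image, Finset.mem_insert, Finset.mem_univ, true_and]
    constructor
    · rintro ⟨i, rfl⟩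
      by_cases h : (i:ℕ) < β
      · left; exact extt_lt l' h
      · right
        exact ⟨l' ⟨(i:ℕ) - β, by have := i.isLt; omega⟩, ⟨_, rfl⟩, (extt_ge l' h).symm⟩
    · rintro (rfl | ⟨v', ⟨w, rfl⟩, rfl⟩)
      · exact ⟨⟨0, by omega⟩, extt_lt l' (by simp only []; omega)⟩
      · exact ⟨⟨β + (w:ℕ), by have := w.isLt; omega⟩,
          extt_apply_add l' w (by have := w.isLt; omega)⟩
  have hnotmem : t ∉ (Finset.image l' univ).image (fun v => v + (t + 1)) := by
    simp only [Finset.mem_image, Finset.mem_univ, true_and]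
    rintro ⟨v, ⟨w, rfl⟩, hv⟩
    have := hl' w
    omega
  rw [typeProd, himg, Finset.prod_insert hnotmem]
  have hinj : ∀ a ∈ Finset.image l' univ, ∀ b ∈ Finset.image l' univ,
      a + (t + 1) = b + (t + 1) → a = b := fun a _ b _ h => by omega
  rw [Finset.prod_image hinj]
  congr 1
  · congr 1
    exact extt_fiber_t hβn.le l' hl'
  · rw [typeProd]
    refine Finset.prod_congr rfl fun v hv => ?_
    simp only [Finset.mem_image, Finset.mem_univ, true_and] at hv
    obtain ⟨w, rfl⟩ := hv
    congr 1
    exact extt_fiber_shift hβn l' hl' (l' w) (hl' w)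

lemma weight_const (hq : 1 < q) {n : ℕ} (hn : 1 ≤ n) (t : ℤ) :
    weight q (fun _ : Fin n => t) = 1 := by
  rw [weight]
  have h1 : typeProd q (fun _ : Fin n => t) = mu q n := by
    rw [typeProd]
    have hne : (univ : Finset (Fin n)).Nonempty := ⟨⟨0, hn⟩, Finset.mem_univ _⟩
    rw [Finset.image_const hne, Finset.prod_singleton]
    have h2 : ((univ : Finset (Fin n)).filter fun i => (fun _ : Fin n => t) i = t) = univ := by
      apply Finset.filter_true_of_mem
      intro i _
      rfl
    rw [h2, Finset.card_univ, Fintype.card_fin]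
  rw [h1, div_self (mu_ne_zero hq n)]
  have h2 : ∀ p ∈ Finset.univ.filter (fun p : Fin n × Fin n => p.1 < p.2),
      (q : ℝ) ^ ((fun _ : Fin n => t) p.2 - (fun _ : Fin n => t) p.1) = 1 := by
    intro p _
    simp
  rw [Finset.prod_congr rfl h2, Finset.prod_const_one, one_mul]

lemma key_summand (hq : 1 < q) {n β x y : ℕ} (α : ℤ) (hβ1 : 1 ≤ β) (hβn : β < n) (hy : y < x)
    {l' : Fin (n - β) → ℤ} (hl' : l' ∈ tuples (n - β) y) :
    q ^ (α * ∑ i, extt n β ((x:ℤ) - 1 - (y:ℤ)) l' i)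
        * weight q (extt n β ((x:ℤ) - 1 - (y:ℤ)) l')
      = gaussBinom q n β * q ^ (α * ((n:ℤ) - (β:ℤ))) * q ^ (α * (n:ℤ) * ((x:ℤ) - 1)) *
          (q ^ (-(α * (n:ℤ) * (y:ℤ))) * (q ^ ((α + (β:ℤ)) * ∑ w, l' w) * weight q l')) := by
  have h0 : (0:ℝ) < q := by linarith
  have hne : q ≠ 0 := h0.ne'
  have hl'0 : ∀ w, 0 ≤ l' w := fun w => ((mem_tuples.1 hl').1 w).1
  simp only [weight]
  rw [typeProd_extt hq hβ1 hβn l' hl'0,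
    prod_zpow_sum hne, prod_zpow_sum hne, pairSum_eq, pairSum_eq,
    sum_extt hβn, pairSum_extt hβn, gaussBinom_eq hq hβn.le,
    ← zpow_natCast q (β * (n - β))]
  set t : ℤ := (x:ℤ) - 1 - (y:ℤ) with ht
  set S' : ℤ := ∑ w : Fin (n - β), (2 * (w:ℤ) - ((n - β:ℕ):ℤ) + 1) * l' w with hS
  set Z : ℤ := ∑ w, l' w with hZ
  set T' : ℝ := typeProd q l' with hT
  rw [show q ^ (α * ((β:ℤ) * t + (Z + ((n - β:ℕ):ℤ) * (t + 1))))
        * (mu q β * T' / mu q n * q ^ (S' + (β:ℤ) * Z + (β:ℤ) * ((n - β:ℕ):ℤ)))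
      = mu q β * T' / mu q n
        * q ^ ((α * ((β:ℤ) * t + (Z + ((n - β:ℕ):ℤ) * (t + 1))))
            + (S' + (β:ℤ) * Z + (β:ℤ) * ((n - β:ℕ):ℤ))) from by
    rw [zpow_add₀ hne (α * ((β:ℤ) * t + (Z + ((n - β:ℕ):ℤ) * (t + 1))))
      (S' + (β:ℤ) * Z + (β:ℤ) * ((n - β:ℕ):ℤ))]
    ring]
  rw [show (α * ((β:ℤ) * t + (Z + ((n - β:ℕ):ℤ) * (t + 1))))
        + (S' + (β:ℤ) * Z + (β:ℤ) * ((n - β:ℕ):ℤ))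
      = ((β * (n - β):ℕ):ℤ) + (α * ((n:ℤ) - (β:ℤ)) + (α * (n:ℤ) * ((x:ℤ) - 1)
          + (-(α * (n:ℤ) * (y:ℤ)) + ((α + (β:ℤ)) * Z + S')))) from by
    rw [ht]
    push_cast [Nat.cast_sub hβn.le]
    ring]
  simp only [zpow_add₀ hne]
  have hmn := mu_ne_zero hq n
  have hmm := mu_ne_zero hq (n - β)
  have hcanc : mu q (n - β) * (mu q (n - β))⁻¹ = 1 := mul_inv_cancel₀ hmm
  linear_combination (-(mu q β * T' * (mu q n)⁻¹ * q ^ (((β * (n - β):ℕ)):ℤ)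
    * q ^ (α * ((n:ℤ) - (β:ℤ))) * q ^ (α * (n:ℤ) * ((x:ℤ) - 1))
    * q ^ (-(α * (n:ℤ) * (y:ℤ))) * q ^ ((α + (β:ℤ)) * Z) * q ^ S')) * hcanc

lemma partB (hq : 1 < q) {n x β y : ℕ} (hn : 1 ≤ n) (α : ℤ)
    (hβ1 : 1 ≤ β) (hβn : β < n) (hy : y < x) :
    ∑ l ∈ (((tuples n x).filter fun l => ¬ ∀ i, l i = l ⟨0, hn⟩).filter fun l =>
        ((((univ : Finset (Fin n)).filter fun i => l i = l ⟨0, hn⟩).card),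
          x - 1 - (l ⟨0, hn⟩).toNat) = (β, y)),
      q ^ (α * ∑ i, l i) * weight q l
    = ∑ l' ∈ tuples (n - β) y,
        gaussBinom q n β * q ^ (α * ((n:ℤ) - (β:ℤ))) * q ^ (α * (n:ℤ) * ((x:ℤ) - 1)) *
          (q ^ (-(α * (n:ℤ) * (y:ℤ))) * (q ^ ((α + (β:ℤ)) * ∑ w, l' w) * weight q l')) := by
  classical
  have hfact : ∀ l ∈ (((tuples n x).filter fun l => ¬ ∀ i, l i = l ⟨0, hn⟩).filter fun l =>
        ((((univ : Finset (Fin n)).filter fun i => l i = l ⟨0, hn⟩).card),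
          x - 1 - (l ⟨0, hn⟩).toNat) = (β, y)),
      l ∈ tuples n x ∧ l ⟨0, hn⟩ = (x:ℤ) - 1 - (y:ℤ)
        ∧ (∀ i : Fin n, l i = l ⟨0, hn⟩ ↔ (i:ℕ) < β) := by
    intro l hl
    simp only [Finset.mem_filter, Prod.mk.injEq] at hl
    obtain ⟨⟨hlt, hnc⟩, hcard, hy2⟩ := hl
    obtain ⟨hb, hm⟩ := mem_tuples.1 hlt
    have hlow : ∀ j ∈ ((univ : Finset (Fin n)).filter fun i => l i = l ⟨0, hn⟩),
        ∀ i : Fin n, i ≤ j → i ∈ ((univ : Finset (Fin n)).filter fun i => l i = l ⟨0, hn⟩) := by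
      intro j hj i hij
      simp only [Finset.mem_filter, Finset.mem_univ, true_and] at hj ⊢
      have h1 : l i ≤ l j := hm hij
      have h2 : l ⟨0, hn⟩ ≤ l i := hm (by simp [Fin.le_def])
      omega
    have hfib : ∀ i : Fin n, l i = l ⟨0, hn⟩ ↔ (i:ℕ) < β := by
      intro i
      have h3 := lower_mem_iff hlow i
      rw [hcard] at h3
      simpa using h3
    obtain ⟨i1, hi1⟩ := not_forall.1 hnc
    have h3 : l ⟨0, hn⟩ < l i1 :=
      lt_of_le_of_ne (hm (by simp [Fin.le_def])) (fun h => hi1 h.symm)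
    have h4 := (hb i1).2
    have h5 := (hb ⟨0, hn⟩).1
    have ht : l ⟨0, hn⟩ = (x:ℤ) - 1 - (y:ℤ) := by omega
    exact ⟨hlt, ht, hfib⟩
  have hImem : ∀ l ∈ (((tuples n x).filter fun l => ¬ ∀ i, l i = l ⟨0, hn⟩).filter fun l =>
        ((((univ : Finset (Fin n)).filter fun i => l i = l ⟨0, hn⟩).card),
          x - 1 - (l ⟨0, hn⟩).toNat) = (β, y)),
      (fun w : Fin (n - β) => l ⟨β + (w:ℕ), by have := w.isLt; omega⟩ - (l ⟨0, hn⟩ + 1))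
        ∈ tuples (n - β) y := by
    intro l hl
    obtain ⟨hlt, ht, hfib⟩ := hfact l hl
    obtain ⟨hb, hm⟩ := mem_tuples.1 hlt
    have hval : ∀ i : Fin n, ¬ ((i:ℕ) < β) → l ⟨0, hn⟩ + 1 ≤ l i := by
      intro i hi
      have h7 : l ⟨0, hn⟩ ≤ l i := hm (by simp [Fin.le_def])
      have h8 : l i ≠ l ⟨0, hn⟩ := fun h => hi ((hfib i).1 h)
      omega
    rw [mem_tuples]
    constructor
    · intro w
      have h6 := hval ⟨β + (w:ℕ), by have := w.isLt; omega⟩ (by simp only []; omega)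
      have h8 := (hb ⟨β + (w:ℕ), by have := w.isLt; omega⟩).2
      constructor
      · omega
      · omega
    · intro w w' hww
      have h9 : (⟨β + (w:ℕ), by have := w.isLt; omega⟩ : Fin n)
          ≤ ⟨β + (w':ℕ), by have := w'.isLt; omega⟩ := by
        simp only [Fin.le_def]
        have : (w:ℕ) ≤ (w':ℕ) := hww
        omega
      have := hm h9
      simp only []
      omega
  have hExt : ∀ l ∈ (((tuples n x).filter fun l => ¬ ∀ i, l i = l ⟨0, hn⟩).filter fun l =>
        ((((univ : Finset (Fin n)).filter fun i => l i = l ⟨0, hn⟩).card),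
          x - 1 - (l ⟨0, hn⟩).toNat) = (β, y)),
      extt n β ((x:ℤ) - 1 - (y:ℤ))
        (fun w : Fin (n - β) => l ⟨β + (w:ℕ), by have := w.isLt; omega⟩ - (l ⟨0, hn⟩ + 1)) = l := by
    intro l hl
    obtain ⟨hlt, ht, hfib⟩ := hfact l hl
    funext idx
    by_cases h : (idx:ℕ) < β
    · rw [extt_lt _ h]
      exact (ht ▸ (hfib idx).2 h).symm
    · rw [extt_ge _ h]
      simp only []
      have hidx : (⟨β + (((⟨(idx:ℕ) - β, by have := idx.isLt; omega⟩ : Fin (n - β))):ℕ),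
          by have := idx.isLt; omega⟩ : Fin n) = idx := by
        apply Fin.ext
        simp only []
        omega
      rw [hidx, ← ht]
      ring
  refine Finset.sum_nbij'
    (i := fun l => fun w : Fin (n - β) =>
      l ⟨β + (w:ℕ), by have := w.isLt; omega⟩ - (l ⟨0, hn⟩ + 1))
    (j := fun l' => extt n β ((x:ℤ) - 1 - (y:ℤ)) l') ?_ ?_ ?_ ?_ ?_
  · exact hImem
  · intro l' hl'
    obtain ⟨hb', hm'⟩ := mem_tuples.1 hl'
    have hl'0 : ∀ w, 0 ≤ l' w := fun w => (hb' w).1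
    simp only [Finset.mem_filter, Prod.mk.injEq]
    have hx1 : 1 ≤ x := by omega
    have hc0 : extt n β ((x:ℤ) - 1 - (y:ℤ)) l' ⟨0, hn⟩ = (x:ℤ) - 1 - (y:ℤ) :=
      extt_lt l' (by simp only []; omega)
    refine ⟨⟨?_, ?_⟩, ?_, ?_⟩
    · rw [mem_tuples]
      constructor
      · intro i
        by_cases h : (i:ℕ) < β
        · rw [extt_lt l' h]; omega
        · rw [extt_ge l' h]
          have h1 := hl'0 ⟨(i:ℕ) - β, by have := i.isLt; omega⟩
          have h2 := (hb' ⟨(i:ℕ) - β, by have := i.isLt; omega⟩).2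
          omega
      · intro i j hij
        have hv : (i:ℕ) ≤ (j:ℕ) := hij
        by_cases h1 : (i:ℕ) < β <;> by_cases h2 : (j:ℕ) < β
        · rw [extt_lt l' h1, extt_lt l' h2]
        · rw [extt_lt l' h1, extt_ge l' h2]
          have := hl'0 ⟨(j:ℕ) - β, by have := j.isLt; omega⟩
          omega
        · omega
        · rw [extt_ge l' h1, extt_ge l' h2]
          have h9 : (⟨(i:ℕ) - β, by have := i.isLt; omega⟩ : Fin (n - β))
              ≤ ⟨(j:ℕ) - β, by have := j.isLt; omega⟩ := by
            simp only [Fin.le_def]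
            omega
          have := hm' h9
          omega
    · intro hP
      have hw0 : 0 < n - β := by omega
      have h1 := hP ⟨β, hβn⟩
      have h2 : extt n β ((x:ℤ) - 1 - (y:ℤ)) l' ⟨β, hβn⟩
          = l' ⟨0, hw0⟩ + (((x:ℤ) - 1 - (y:ℤ)) + 1) := by
        have h4 : (⟨(((⟨β, hβn⟩ : Fin n)):ℕ) - β,
            by have := (⟨β, hβn⟩ : Fin n).isLt; omega⟩ : Fin (n - β)) = ⟨0, hw0⟩ := by
          apply Fin.ext
          simp only []
          omega
        rw [extt_ge l' (by simp only []; omega), h4]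
      rw [h2, hc0] at h1
      have h3 := hl'0 ⟨0, hw0⟩
      omega
    · have h2 : ((univ : Finset (Fin n)).filter
          fun i => extt n β ((x:ℤ) - 1 - (y:ℤ)) l' i
            = extt n β ((x:ℤ) - 1 - (y:ℤ)) l' ⟨0, hn⟩)
          = (univ : Finset (Fin n)).filter
            fun i => extt n β ((x:ℤ) - 1 - (y:ℤ)) l' i = (x:ℤ) - 1 - (y:ℤ) := by
        rw [hc0]
      rw [h2]
      exact extt_fiber_t hβn.le l' hl'0
    · rw [hc0]
      omega
  · exact hExt
  · intro l' hl'
    have hl'0 : ∀ w, 0 ≤ l' w := fun w => ((mem_tuples.1 hl').1 w).1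
    funext w
    rw [extt_apply_add l' w (by have := w.isLt; omega), extt_lt l' (by simp only []; omega)]
    ring
  · intro l hl
    conv_lhs => rw [← hExt l hl]
    exact key_summand hq α hβ1 hβn hy (hImem l hl)

end tp

/-- **First recursion for `vol_{n,α}`.** For `q > 1` and all integers `n ≥ 1`, `α`, `x ≥ 0`:
`vol_{n,α}(x) = Σ_{y=0}^{x} q^{αny}
  + Σ_{β=1}^{n−1} binom(n,β)_q · q^{α(n−β)} · q^{αn(x−1)} · Σ_{y=0}^{x−1} q^{−αny} vol_{n−β,α+β}(y)`. -/
theorem vol_recursion_one (q : ℝ) (hq : 1 < q) (n : ℕ) (hn : 1 ≤ n) (α : ℤ) (x : ℕ) :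
    vol q n α x =
      (∑ y ∈ Finset.range (x + 1), q ^ (α * (n : ℤ) * (y : ℤ))) +
        ∑ β ∈ Finset.Ico 1 n,
          gaussBinom q n β * q ^ (α * ((n : ℤ) - (β : ℤ))) * q ^ (α * (n : ℤ) * ((x : ℤ) - 1)) *
            ∑ y ∈ Finset.range x,
              q ^ (-(α * (n : ℤ) * (y : ℤ))) * vol q (n - β) (α + (β : ℤ)) y := by
  classical
  simp only [vol]
  rw [← Finset.sum_filter_add_sum_filter_not (tuples n x) (fun l => ∀ i, l i = l ⟨0, hn⟩)]
  congr 1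
  · -- constant part
    refine Finset.sum_nbij' (i := fun l => (l ⟨0, hn⟩).toNat)
      (j := fun y => fun _ : Fin n => (y:ℤ)) ?_ ?_ ?_ ?_ ?_
    · intro l hl
      simp only [Finset.mem_filter] at hl
      obtain ⟨hlt, _⟩ := hl
      have h1 := (mem_tuples.1 hlt).1 ⟨0, hn⟩
      simp only [Finset.mem_range]
      omega
    · intro y hy
      simp only [Finset.mem_range] at hy
      simp only [Finset.mem_filter]
      refine ⟨mem_tuples.2 ⟨fun i => ⟨by positivity, by exact_mod_cast Nat.le_of_lt_succ hy⟩,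
        monotone_const⟩, by simp⟩
    · intro l hl
      simp only [Finset.mem_filter] at hl
      obtain ⟨hlt, hP⟩ := hl
      have h1 := ((mem_tuples.1 hlt).1 ⟨0, hn⟩).1
      funext i
      rw [Int.toNat_of_nonneg h1]
      exact (hP i).symm
    · intro y _
      simp only [Int.toNat_natCast]
    · intro l hl
      simp only [Finset.mem_filter] at hl
      obtain ⟨hlt, hP⟩ := hl
      have h1 := ((mem_tuples.1 hlt).1 ⟨0, hn⟩).1
      have hconst : l = fun _ : Fin n => l ⟨0, hn⟩ := funext fun i => hP i
      conv_lhs => rw [hconst]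
      rw [weight_const hq hn, mul_one]
      simp only []
      rw [Finset.sum_const, Finset.card_univ, Fintype.card_fin]
      congr 1
      rw [nsmul_eq_mul, Int.toNat_of_nonneg h1]
      ring
  · -- nonconstant part
    have hmaps : ∀ l ∈ (tuples n x).filter (fun l => ¬ ∀ i, l i = l ⟨0, hn⟩),
        ((((univ : Finset (Fin n)).filter fun i => l i = l ⟨0, hn⟩).card),
          x - 1 - (l ⟨0, hn⟩).toNat) ∈ Finset.Ico 1 n ×ˢ Finset.range x := by
      intro l hl
      simp only [Finset.mem_filter] at hl
      obtain ⟨hlt, hP⟩ := hl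
      obtain ⟨hb, hm⟩ := mem_tuples.1 hlt
      have h1 : (⟨0, hn⟩ : Fin n) ∈ (univ : Finset (Fin n)).filter
          fun i => l i = l ⟨0, hn⟩ := by simp
      have hB1 : 1 ≤ ((univ : Finset (Fin n)).filter fun i => l i = l ⟨0, hn⟩).card :=
        Finset.card_pos.2 ⟨_, h1⟩
      have hBn : ((univ : Finset (Fin n)).filter fun i => l i = l ⟨0, hn⟩).card ≤ n := by
        have h2 := Finset.card_filter_le (univ : Finset (Fin n)) (fun i => l i = l ⟨0, hn⟩)
        rwa [Finset.card_univ, Fintype.card_fin] at h2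
      have hBne : ((univ : Finset (Fin n)).filter fun i => l i = l ⟨0, hn⟩).card ≠ n := by
        intro hEq
        have h3 : ((univ : Finset (Fin n)).filter fun i => l i = l ⟨0, hn⟩) = univ :=
          Finset.eq_univ_of_card _ (by rw [hEq, Fintype.card_fin])
        apply hP
        intro i
        have h4 : i ∈ ((univ : Finset (Fin n)).filter fun i => l i = l ⟨0, hn⟩) := by
          rw [h3]; exact Finset.mem_univ i
        exact (Finset.mem_filter.1 h4).2
      obtain ⟨i1, hi1⟩ := not_forall.1 hP
      have h5 : l ⟨0, hn⟩ < l i1 :=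
        lt_of_le_of_ne (hm (by simp [Fin.le_def])) (fun h => hi1 h.symm)
      have h6 := (hb i1).2
      have h7 := (hb ⟨0, hn⟩).1
      simp only [Finset.mem_product, Finset.mem_Ico, Finset.mem_range]
      exact ⟨⟨hB1, lt_of_le_of_ne hBn hBne⟩, by omega⟩
    rw [← Finset.sum_fiberwise_of_maps_to hmaps, Finset.sum_product]
    refine Finset.sum_congr rfl fun β hβ => ?_
    rw [Finset.mul_sum]
    refine Finset.sum_congr rfl fun y hy => ?_
    rw [Finset.mul_sum, Finset.mul_sum]
    obtain ⟨hβ1, hβn⟩ := Finset.mem_Ico.1 hβ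
    exact partB hq hn α hβ1 hβn (Finset.mem_range.1 hy)
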